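/- Let K be a field and G a finite simple connected graph. The toric ideal I_G is subgraph splittable if and only if it is edge splittable. -/

import Mathlib

open MvPolynomial

/-- The monomial `y_u * y_w` associated to the edge `e = {u, w}`. -/
noncomputable def edgeMon (K : Type) [Field K] {V : Type} (e : Sym2 V) :
    MvPolynomial V K :=
  Sym2.lift ⟨fun u w => X u * X w, fun u w => mul_comm _ _⟩ e

/-- The toric ideal `I_G` of a graph `G`, i.e. the kernel of the `K`-algebra map
`K[x_e : e ∈ E(G)] → K[y_v : v ∈ V]`, sending `x_e ↦ y_u y_w` for `e = {u, w}`. -/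
noncomputable def toricIdeal (K : Type) [Field K] {V : Type} (G : SimpleGraph V) :
    Ideal (MvPolynomial G.edgeSet K) :=
  RingHom.ker (MvPolynomial.aeval (fun e : G.edgeSet => edgeMon K (e : Sym2 V)) :
    MvPolynomial G.edgeSet K →ₐ[K] MvPolynomial V K)

/-- For a subgraph `H ≤ G`, the ideal of `K[x_e : e ∈ E(G)]` obtained by extending
the toric ideal `I_H` along the inclusion of variables `x_e` (`e ∈ E(H)`). -/
noncomputable def extIdeal (K : Type) [Field K] {V : Type} (G H : SimpleGraph V)
    (h : H ≤ G) : Ideal (MvPolynomial G.edgeSet K) :=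
  (toricIdeal K H).map
    (MvPolynomial.rename (Set.inclusion (SimpleGraph.edgeSet_mono h)) :
      MvPolynomial H.edgeSet K →ₐ[K] MvPolynomial G.edgeSet K)

/-- A subgraph splitting `I_G = I_{G₁} + I_{G₂}`, with `I_{G₁} ≠ I_G ≠ I_{G₂}`. -/
def IsSubgraphSplitting (K : Type) [Field K] {V : Type} (G G₁ G₂ : SimpleGraph V)
    (h₁ : G₁ ≤ G) (h₂ : G₂ ≤ G) : Prop :=
  toricIdeal K G = extIdeal K G G₁ h₁ + extIdeal K G G₂ h₂ ∧
    extIdeal K G G₁ h₁ ≠ toricIdeal K G ∧ extIdeal K G G₂ h₂ ≠ toricIdeal K G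

/-- `I_G` is subgraph splittable. -/
def SubgraphSplittable (K : Type) [Field K] {V : Type} (G : SimpleGraph V) : Prop :=
  ∃ (G₁ G₂ : SimpleGraph V) (h₁ : G₁ ≤ G) (h₂ : G₂ ≤ G),
    IsSubgraphSplitting K G G₁ G₂ h₁ h₂

/-- Alternating products: for a list `[e₁, …, e₂q]` the first component is
`x_{e₁} x_{e₃} ⋯` (odd positions) and the second is `x_{e₂} x_{e₄} ⋯` (even positions). -/
noncomputable def altProd (K : Type) [Field K] {α : Type} :
    List α → MvPolynomial α K × MvPolynomial α K
  | [] => (1, 1)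
  | a :: l => (X a * (altProd K l).2, (altProd K l).1)

/-- The edges of a walk in `G`, as a list of elements of `E(G)`. -/
def walkEdgeList {V : Type} {G : SimpleGraph V} {u v : V} (w : G.Walk u v) :
    List G.edgeSet :=
  w.edges.attachWith (· ∈ G.edgeSet) (fun _ he => w.edges_subset_edgeSet he)

/-- The binomial `B_w` of an even closed walk `w = (e_{i₁}, …, e_{i₂q})`:
`∏ x_{e_{i_{2k-1}}} - ∏ x_{e_{i_{2k}}}`. -/
noncomputable def walkBinomial (K : Type) [Field K] {V : Type} {G : SimpleGraph V}
    {v : V} (w : G.Walk v v) : MvPolynomial G.edgeSet K :=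
  (altProd K (walkEdgeList w)).1 - (altProd K (walkEdgeList w)).2

/-- `f` is a binomial of `I_G`, i.e. `f = B_w` for an even closed walk `w` of `G`. -/
def IsBinomial (K : Type) [Field K] {V : Type} (G : SimpleGraph V)
    (f : MvPolynomial G.edgeSet K) : Prop :=
  ∃ (v : V) (w : G.Walk v v), Even w.length ∧ f = walkBinomial K w

/-- `S` is a minimal generating set of binomials of the ideal `I`: all its members
are binomials `B_w`, it generates `I`, and no proper subset generates `I`. -/
def IsMinBinomialGens (K : Type) [Field K] {V : Type} (G : SimpleGraph V)
    (S : Set (MvPolynomial G.edgeSet K)) (I : Ideal (MvPolynomial G.edgeSet K)) : Prop :=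
  (∀ f ∈ S, IsBinomial K G f) ∧ Ideal.span S = I ∧
    ∀ T : Set (MvPolynomial G.edgeSet K), T ⊂ S → Ideal.span T ≠ I

/-- A family of even closed walks `w₁, …, w_r` of `G` (the data underlying a set of
binomials `S = {B_{w₁}, …, B_{w_r}}`). -/
structure BinomialWalkGens (K : Type) [Field K] {V : Type} (G : SimpleGraph V) where
  r : ℕ
  base : Fin r → V
  walk : (i : Fin r) → G.Walk (base i) (base i)
  even : ∀ i, Even (walk i).length

namespace BinomialWalkGens

variable {K : Type} [Field K] {V : Type} {G : SimpleGraph V}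

/-- The set of binomials `{B_{w₁}, …, B_{w_r}}`. -/
def binomials (S : BinomialWalkGens K G) : Set (MvPolynomial G.edgeSet K) :=
  Set.range fun i => walkBinomial K (S.walk i)

/-- `S = {B_{w₁}, …, B_{w_r}}` is a minimal generating set of binomials of `I`. -/
def IsMinGens (S : BinomialWalkGens K G) (I : Ideal (MvPolynomial G.edgeSet K)) : Prop :=
  IsMinBinomialGens K G S.binomials I

/-- The subgraph `G_S^e` of `G`: the union of the walks `w_i` with `e ∈ E(w_i)`. -/
def GSe (S : BinomialWalkGens K G) (e : Sym2 V) : SimpleGraph V :=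
  SimpleGraph.fromEdgeSet (⋃ i ∈ {i : Fin S.r | e ∈ (S.walk i).edges}, {f | f ∈ (S.walk i).edges})

lemma GSe_le (S : BinomialWalkGens K G) (e : Sym2 V) : S.GSe e ≤ G := by
  intro u w h
  rw [GSe, SimpleGraph.fromEdgeSet_adj] at h
  obtain ⟨hm, hne⟩ := h
  simp only [Set.mem_iUnion, Set.mem_setOf_eq] at hm
  obtain ⟨i, -, hi⟩ := hm
  exact G.mem_edgeSet.mp ((S.walk i).edges_subset_edgeSet hi)

/-- The subgraph `G_S^F = ⋃_{e ∈ F} G_S^e` of `G`. -/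
def GSF (S : BinomialWalkGens K G) (F : Set (Sym2 V)) : SimpleGraph V :=
  ⨆ e ∈ F, S.GSe e

lemma GSF_le (S : BinomialWalkGens K G) (F : Set (Sym2 V)) : S.GSF F ≤ G :=
  iSup₂_le fun e _ => S.GSe_le e

/-- The subgraph `G_S^v` of `G`: the union of the edge sets of the walks `w_i`
with `v ∈ V(w_i)`. -/
def GSv (S : BinomialWalkGens K G) (v : V) : SimpleGraph V :=
  SimpleGraph.fromEdgeSet (⋃ i ∈ {i : Fin S.r | v ∈ (S.walk i).support}, {f | f ∈ (S.walk i).edges})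

lemma GSv_le (S : BinomialWalkGens K G) (v : V) : S.GSv v ≤ G := by
  intro u w h
  rw [GSv, SimpleGraph.fromEdgeSet_adj] at h
  obtain ⟨hm, hne⟩ := h
  simp only [Set.mem_iUnion, Set.mem_setOf_eq] at hm
  obtain ⟨i, -, hi⟩ := hm
  exact G.mem_edgeSet.mp ((S.walk i).edges_subset_edgeSet hi)

end BinomialWalkGens

/-- `I_G` is edge splittable: there are an edge `e` of `G` and a minimal generating
set of binomials `S` of `I_G` such that `I_G = I_{G_S^e} + I_{G∖e}` is a subgraph
splitting of `I_G`. -/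
def EdgeSplittable (K : Type) [Field K] {V : Type} (G : SimpleGraph V) : Prop :=
  ∃ (e : Sym2 V) (_ : e ∈ G.edgeSet) (S : BinomialWalkGens K G),
    S.IsMinGens (toricIdeal K G) ∧
    IsSubgraphSplitting K G (S.GSe e) (G.deleteEdges {e}) (S.GSe_le e)
      (SimpleGraph.deleteEdges_le _)

/-- A minimal splitting: a subgraph splitting `I_G = I_{G₁} + I_{G₂}` admitting
minimal generating sets of binomials `S` of `I_{G₁}` and `T` of `I_{G₂}` such that
`S ∪ T` is a minimal generating set of `I_G`. -/
def IsMinimalSplitting (K : Type) [Field K] {V : Type} (G G₁ G₂ : SimpleGraph V)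
    (h₁ : G₁ ≤ G) (h₂ : G₂ ≤ G) : Prop :=
  IsSubgraphSplitting K G G₁ G₂ h₁ h₂ ∧
    ∃ S T : Set (MvPolynomial G.edgeSet K),
      IsMinBinomialGens K G S (extIdeal K G G₁ h₁) ∧
      IsMinBinomialGens K G T (extIdeal K G G₂ h₂) ∧
      IsMinBinomialGens K G (S ∪ T) (toricIdeal K G)

/-- A reduced splitting: a subgraph splitting `I_G = I_{G₁} + I_{G₂}` such that for all
subgraphs `H₁ ⊆ G₁`, `H₂ ⊆ G₂` with `I_G = I_{H₁} + I_{H₂}` one has `I_{H₁} = I_{G₁}`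
and `I_{H₂} = I_{G₂}`. -/
def IsReducedSplitting (K : Type) [Field K] {V : Type} (G G₁ G₂ : SimpleGraph V)
    (h₁ : G₁ ≤ G) (h₂ : G₂ ≤ G) : Prop :=
  IsSubgraphSplitting K G G₁ G₂ h₁ h₂ ∧
    ∀ (H₁ H₂ : SimpleGraph V) (hH₁ : H₁ ≤ G₁) (hH₂ : H₂ ≤ G₂),
      toricIdeal K G = extIdeal K G H₁ (hH₁.trans h₁) + extIdeal K G H₂ (hH₂.trans h₂) →
      extIdeal K G H₁ (hH₁.trans h₁) = extIdeal K G G₁ h₁ ∧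
        extIdeal K G H₂ (hH₂.trans h₂) = extIdeal K G G₂ h₂

/-- The wheel graph `W_{n+1}`: vertices `0, …, n-1` (the cycle `C_n`, with edges between
`i` and `(i+1) % n`) together with the universal vertex `n` joined to all cycle vertices. -/
def wheelGraph (n : ℕ) : SimpleGraph (Fin (n + 1)) :=
  SimpleGraph.fromRel fun u v =>
    (u.val < n ∧ v.val < n ∧ v.val = (u.val + 1) % n) ∨ (u.val = n ∧ v.val < n)

namespace ToricAux

variable (K : Type) [Field K] {V : Type}

/-- the toric map -/
noncomputable def tphi (G : SimpleGraph V) :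
    MvPolynomial G.edgeSet K →ₐ[K] MvPolynomial V K :=
  MvPolynomial.aeval (fun e : G.edgeSet => edgeMon K (e : Sym2 V))

lemma toricIdeal_eq_ker (G : SimpleGraph V) :
    toricIdeal K G = RingHom.ker (tphi K G) := rfl

lemma mem_toricIdeal_iff {G : SimpleGraph V} (f : MvPolynomial G.edgeSet K) :
    f ∈ toricIdeal K G ↔ tphi K G f = 0 := Iff.rfl

@[simp] lemma edgeMon_mk (u w : V) : edgeMon K s(u, w) = X u * X w := by
  simp [edgeMon]

/-- degree vector of an edge -/
noncomputable def symDeg : Sym2 V → (V →₀ ℕ) :=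
  Sym2.lift ⟨fun u w => Finsupp.single u 1 + Finsupp.single w 1,
    fun u w => add_comm _ _⟩

@[simp] lemma symDeg_mk (u w : V) :
    symDeg s(u, w) = Finsupp.single u 1 + Finsupp.single w 1 := by
  simp [symDeg]

lemma edgeMon_eq_monomial (e : Sym2 V) :
    edgeMon K e = monomial (symDeg e) 1 := by
  induction e using Sym2.inductionOn with
  | hf u w =>
    rw [edgeMon_mk, symDeg_mk, X, X, monomial_mul, one_mul]

lemma edgeMon_ne_zero (e : Sym2 V) : edgeMon K e ≠ 0 := by
  rw [edgeMon_eq_monomial]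
  simp [monomial_eq_zero]

lemma symDeg_apply_pos_iff (e : Sym2 V) (v : V) :
    0 < symDeg e v ↔ v ∈ e := by
  induction e using Sym2.inductionOn with
  | hf u w =>
    rw [symDeg_mk, Sym2.mem_iff]
    simp [Finsupp.single_apply]
    constructor
    · intro h
      by_contra hc
      push_neg at hc
      simp [Ne.symm hc.1, Ne.symm hc.2] at h
    · rintro (rfl | rfl) <;> simp

/-- product of variables of a multiset -/
noncomputable def prodM {α : Type} (m : Multiset α) : MvPolynomial α K :=
  (m.map X).prod

@[simp] lemma prodM_zero {α : Type} : prodM K (0 : Multiset α) = 1 := rfl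

@[simp] lemma prodM_cons {α : Type} (a : α) (m : Multiset α) :
    prodM K (a ::ₘ m) = X a * prodM K m := by
  simp [prodM]

lemma prodM_add {α : Type} (m n : Multiset α) :
    prodM K (m + n) = prodM K m * prodM K n := by
  simp [prodM]

/-- degree vector of a multiset of edges -/
noncomputable def degVec {G : SimpleGraph V} (m : Multiset G.edgeSet) : V →₀ ℕ :=
  (m.map (fun e => symDeg (e : Sym2 V))).sum

@[simp] lemma degVec_zero {G : SimpleGraph V} : degVec (0 : Multiset G.edgeSet) = 0 := rfl

@[simp] lemma degVec_cons {G : SimpleGraph V} (e : G.edgeSet) (m : Multiset G.edgeSet) :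
    degVec (e ::ₘ m) = symDeg (e : Sym2 V) + degVec m := by
  simp [degVec]

lemma degVec_apply {G : SimpleGraph V} (m : Multiset G.edgeSet) (v : V) :
    degVec m v = (m.map (fun e => symDeg e.val v)).sum := by
  induction m using Multiset.induction_on with
  | empty => simp
  | cons a s ih => simp [ih]

lemma tphi_prodM {G : SimpleGraph V} (m : Multiset G.edgeSet) :
    tphi K G (prodM K m) = monomial (degVec m) 1 := by
  induction m using Multiset.induction_on with
  | empty => simp [tphi]
  | cons a s ih =>
    rw [prodM_cons, map_mul, ih, degVec_cons]
    have : tphi K G (X a) = edgeMon K (a : Sym2 V) := by simp [tphi]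
    rw [this, edgeMon_eq_monomial, monomial_mul, one_mul]

lemma tphi_prodM_ne_zero {G : SimpleGraph V} (m : Multiset G.edgeSet) :
    tphi K G (prodM K m) ≠ 0 := by
  rw [tphi_prodM]
  simp [monomial_eq_zero]

lemma exists_mem_of_degVec_pos {G : SimpleGraph V} {m : Multiset G.edgeSet} {v : V}
    (h : 0 < degVec m v) : ∃ e ∈ m, v ∈ (e : Sym2 V) := by
  rw [degVec_apply] at h
  by_contra hc
  push_neg at hc
  have hz : (m.map (fun e => symDeg e.val v)).sum = 0 := by
    apply Multiset.sum_eq_zero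
    intro x hx
    obtain ⟨e, he, rfl⟩ := Multiset.mem_map.mp hx
    have h1 := hc e he
    have h2 : ¬ 0 < symDeg e.val v := fun hp => h1 ((symDeg_apply_pos_iff (e : Sym2 V) v).mp hp)
    omega
  rw [hz] at h
  exact absurd h (lt_irrefl 0)

lemma degVec_pos_of_mem {G : SimpleGraph V} {m : Multiset G.edgeSet} {e : G.edgeSet} {v : V}
    (he : e ∈ m) (hv : v ∈ (e : Sym2 V)) : 0 < degVec m v := by
  obtain ⟨m', rfl⟩ := Multiset.exists_cons_of_mem he
  rw [degVec_cons]
  have := (symDeg_apply_pos_iff (e : Sym2 V) v).mpr hv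
  simp only [Finsupp.add_apply]
  omega

/-! ### position split of a list -/

def posSplit {α : Type} : List α → Multiset α × Multiset α
  | [] => (0, 0)
  | a :: l => (a ::ₘ (posSplit l).2, (posSplit l).1)

@[simp] lemma altProd_nil : altProd K ([] : List α) = (1, 1) := rfl

@[simp] lemma altProd_cons (a : α) (l : List α) :
    altProd K (a :: l) = (X a * (altProd K l).2, (altProd K l).1) := rfl

@[simp] lemma posSplit_nil {α : Type} : posSplit ([] : List α) = (0, 0) := rfl

@[simp] lemma posSplit_cons {α : Type} (a : α) (l : List α) :
    posSplit (a :: l) = (a ::ₘ (posSplit l).2, (posSplit l).1) := rfl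

lemma posSplit_add {α : Type} (l : List α) :
    (posSplit l).1 + (posSplit l).2 = (l : Multiset α) := by
  induction l with
  | nil => rfl
  | cons a t ih =>
    simp only [posSplit_cons]
    rw [Multiset.cons_add, add_comm ((posSplit t).2) ((posSplit t).1), ih]
    rfl

lemma posSplit_card {α : Type} (l : List α) :
    (Even l.length → (posSplit l).1.card = (posSplit l).2.card) ∧
    (Odd l.length → (posSplit l).1.card = (posSplit l).2.card + 1) := by
  induction l with
  | nil => simp
  | cons a t ih =>
    simp only [posSplit_cons, List.length_cons, Multiset.card_cons]
    constructor
    · intro h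
      have ht : Odd t.length := by
        rcases Nat.even_or_odd t.length with he | ho
        · exfalso
          have : Odd (t.length + 1) := Even.add_one he
          exact (Nat.not_odd_iff_even.mpr h) this
        · exact ho
      rw [ih.2 ht]
    · intro h
      have ht : Even t.length := by
        rcases Nat.even_or_odd t.length with he | ho
        · exact he
        · exfalso
          have : Even (t.length + 1) := Odd.add_one ho
          exact (Nat.not_even_iff_odd.mpr h) this
      rw [ih.1 ht]

lemma altProd_fst_eq (l : List α) : (altProd K l).1 = prodM K (posSplit l).1 ∧
    (altProd K l).2 = prodM K (posSplit l).2 := by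
  induction l with
  | nil => constructor <;> rfl
  | cons a t ih =>
    constructor
    · show X a * (altProd K t).2 = prodM K (a ::ₘ (posSplit t).2)
      rw [prodM_cons, ih.2]
    · show (altProd K t).1 = prodM K (posSplit t).1
      exact ih.1

/-! ### walk edge lists -/

variable {G : SimpleGraph V}

@[simp] lemma walkEdgeList_nil {u : V} :
    walkEdgeList (SimpleGraph.Walk.nil : G.Walk u u) = [] := rfl

lemma walkEdgeList_cons {u x v : V} (h : G.Adj u x) (w : G.Walk x v) :
    walkEdgeList (SimpleGraph.Walk.cons h w) =
      ⟨s(u, x), h⟩ :: walkEdgeList w := by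
  simp [walkEdgeList, SimpleGraph.Walk.edges_cons, List.attachWith_cons]

lemma length_walkEdgeList {u v : V} (w : G.Walk u v) :
    (walkEdgeList w).length = w.length := by
  rw [walkEdgeList, List.length_attachWith, SimpleGraph.Walk.length_edges]

lemma mem_walkEdgeList {u v : V} (w : G.Walk u v) (e : G.edgeSet) :
    e ∈ walkEdgeList w ↔ (e : Sym2 V) ∈ w.edges := by
  induction w with
  | nil => simp
  | cons h p ih =>
    rw [walkEdgeList_cons]
    simp only [List.mem_cons, SimpleGraph.Walk.edges_cons, Subtype.ext_iff, ih]

/-! ### walk binomials lie in the toric ideal -/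

lemma tphi_altProd {u u' : V} (w : G.Walk u u') :
    (Even w.length →
      tphi K G (altProd K (walkEdgeList w)).1 * X u' =
      tphi K G (altProd K (walkEdgeList w)).2 * X u) ∧
    (Odd w.length →
      tphi K G (altProd K (walkEdgeList w)).1 =
      tphi K G (altProd K (walkEdgeList w)).2 * X u * X u') := by
  induction w with
  | nil => simp
  | @cons a b c h p ih =>
    rw [walkEdgeList_cons]
    constructor
    · intro heven
      have hodd : Odd p.length := by
        have : (SimpleGraph.Walk.cons h p).length = p.length + 1 := rfl
        rw [this] at heven
        rcases Nat.even_or_odd p.length with he | ho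
        · exact absurd (Even.add_one he) (Nat.not_odd_iff_even.mpr heven)
        · exact ho
      show tphi K G (X (⟨s(a, b), h⟩ : G.edgeSet) * (altProd K (walkEdgeList p)).2) * X c = _
      have h1 : tphi K G (X (⟨s(a, b), h⟩ : G.edgeSet)) = X a * X b := by
        simp [tphi]
      rw [map_mul, h1]
      have h2 := ih.2 hodd
      show X a * X b * tphi K G (altProd K (walkEdgeList p)).2 * X c =
        tphi K G (altProd K (walkEdgeList p)).1 * X a
      linear_combination (-(X a : MvPolynomial V K)) * h2
    · intro hodd
      have heven : Even p.length := by
        have : (SimpleGraph.Walk.cons h p).length = p.length + 1 := rfl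
        rw [this] at hodd
        rcases Nat.even_or_odd p.length with he | ho
        · exact he
        · exact absurd (Odd.add_one ho) (Nat.not_even_iff_odd.mpr hodd)
      show tphi K G (X (⟨s(a, b), h⟩ : G.edgeSet) * (altProd K (walkEdgeList p)).2) = _
      have h1 : tphi K G (X (⟨s(a, b), h⟩ : G.edgeSet)) = X a * X b := by
        simp [tphi]
      rw [map_mul, h1]
      have h2 := ih.1 heven
      show X a * X b * tphi K G (altProd K (walkEdgeList p)).2 =
        tphi K G (altProd K (walkEdgeList p)).1 * X a * X c
      linear_combination (-(X a : MvPolynomial V K)) * h2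



lemma tphi_walkBinomial_eq {v : V} (w : G.Walk v v) (he : Even w.length) :
    tphi K G (altProd K (walkEdgeList w)).1 = tphi K G (altProd K (walkEdgeList w)).2 := by
  have h := (tphi_altProd K w).1 he
  have hX : (X v : MvPolynomial V K) ≠ 0 := X_ne_zero v
  exact mul_right_cancel₀ hX h

lemma walkBinomial_mem_toricIdeal {v : V} (w : G.Walk v v) (he : Even w.length) :
    walkBinomial K w ∈ toricIdeal K G := by
  rw [mem_toricIdeal_iff, walkBinomial, map_sub, tphi_walkBinomial_eq K w he, sub_self]


/-! ### symDeg applied -/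

lemma symDeg_apply_mk [DecidableEq V] (u w v : V) :
    symDeg s(u, w) v = (if v = u then 1 else 0) + (if v = w then 1 else 0) := by
  rw [symDeg_mk]
  simp [Finsupp.single_apply, eq_comm]

/-! ### the alternating-walk extraction lemma -/

lemma exists_alt_walk [DecidableEq V] {G : SimpleGraph V} :
    ∀ (n : ℕ) (b' a' : Multiset G.edgeSet) (x z : V), b'.card = n →
    (∀ v, degVec a' v + (if v = x then 1 else 0) + (if v = z then 1 else 0) = degVec b' v) →
    ∃ w : G.Walk x z,
      (posSplit (walkEdgeList w)).1 ≤ b' ∧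
      (posSplit (walkEdgeList w)).2 ≤ a' ∧
      (posSplit (walkEdgeList w)).1.card = (posSplit (walkEdgeList w)).2.card + 1 := by
  intro n
  induction n using Nat.strong_induction_on with
  | _ n IH =>
    intro b' a' x z hcard hinv
    have hbx : 0 < degVec b' x := by
      have h := hinv x
      simp only [eq_self_iff_true, if_true] at h
      omega
    obtain ⟨ee, heeb, hxe⟩ := exists_mem_of_degVec_pos hbx
    set y := Sym2.Mem.other' hxe with hy
    have hspec : s(x, y) = (ee : Sym2 V) := Sym2.other_spec' hxe
    have hadj : G.Adj x y := by
      rw [← SimpleGraph.mem_edgeSet, hspec]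
      exact ee.property
    by_cases hyz : y = z
    · subst hyz
      refine ⟨SimpleGraph.Walk.cons hadj SimpleGraph.Walk.nil, ?_, ?_, ?_⟩ <;>
        rw [walkEdgeList_cons, walkEdgeList_nil]
      · show (⟨s(x, y), hadj⟩ : G.edgeSet) ::ₘ (posSplit ([] : List G.edgeSet)).2 ≤ b'
        have : (⟨s(x, y), hadj⟩ : G.edgeSet) = ee := Subtype.ext hspec
        rw [this]
        simpa using heeb
      · simp
      · simp
    · have hney : x ≠ y := hadj.ne
      have hyb : 0 < degVec b' y := by
        apply degVec_pos_of_mem heeb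
        rw [← hspec]
        simp
      have hay : 0 < degVec a' y := by
        have h := hinv y
        rw [if_neg (Ne.symm hney), if_neg hyz] at h
        omega
      obtain ⟨ff, hfa, hyf⟩ := exists_mem_of_degVec_pos hay
      set t := Sym2.Mem.other' hyf with ht
      have hspec2 : s(y, t) = (ff : Sym2 V) := Sym2.other_spec' hyf
      have hadj2 : G.Adj y t := by
        rw [← SimpleGraph.mem_edgeSet, hspec2]
        exact ff.property
      have hb'card : 0 < n := by
        rw [← hcard]
        exact Multiset.card_pos_iff_exists_mem.mpr ⟨ee, heeb⟩
      have hcard' : (b'.erase ee).card = n - 1 := by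
        rw [Multiset.card_erase_of_mem heeb, hcard]
        rfl
      have hinv' : ∀ v, degVec (a'.erase ff) v + (if v = t then 1 else 0) +
          (if v = z then 1 else 0) = degVec (b'.erase ee) v := by
        intro v
        have ea : a' = ff ::ₘ a'.erase ff := (Multiset.cons_erase hfa).symm
        have eb : b' = ee ::ₘ b'.erase ee := (Multiset.cons_erase heeb).symm
        have h1 : degVec a' v = symDeg (ff : Sym2 V) v + degVec (a'.erase ff) v := by
          conv_lhs => rw [ea]
          rw [degVec_cons]
          simp [Finsupp.add_apply]
        have h2 : degVec b' v = symDeg (ee : Sym2 V) v + degVec (b'.erase ee) v := by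
          conv_lhs => rw [eb]
          rw [degVec_cons]
          simp [Finsupp.add_apply]
        have h3 : symDeg (ee : Sym2 V) v = (if v = x then 1 else 0) + (if v = y then 1 else 0) := by
          rw [← hspec, symDeg_apply_mk]
        have h4 : symDeg (ff : Sym2 V) v = (if v = y then 1 else 0) + (if v = t then 1 else 0) := by
          rw [← hspec2, symDeg_apply_mk]
        have hv := hinv v
        rw [h1, h4] at hv
        rw [h2, h3] at hv
        omega
      obtain ⟨w', hw1, hw2, hw3⟩ := IH (n - 1) (by omega) (b'.erase ee) (a'.erase ff) t z hcard' hinv'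
      refine ⟨SimpleGraph.Walk.cons hadj (SimpleGraph.Walk.cons hadj2 w'), ?_, ?_, ?_⟩ <;>
        rw [walkEdgeList_cons, walkEdgeList_cons, posSplit_cons, posSplit_cons]
      · show (⟨s(x, y), hadj⟩ : G.edgeSet) ::ₘ (posSplit (walkEdgeList w')).1 ≤ b'
        have hee : (⟨s(x, y), hadj⟩ : G.edgeSet) = ee := Subtype.ext hspec
        rw [hee]
        calc ee ::ₘ (posSplit (walkEdgeList w')).1 ≤ ee ::ₘ b'.erase ee :=
              Multiset.cons_le_cons _ hw1
          _ = b' := Multiset.cons_erase heeb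
      · show (⟨s(y, t), hadj2⟩ : G.edgeSet) ::ₘ (posSplit (walkEdgeList w')).2 ≤ a'
        have hff : (⟨s(y, t), hadj2⟩ : G.edgeSet) = ff := Subtype.ext hspec2
        rw [hff]
        calc ff ::ₘ (posSplit (walkEdgeList w')).2 ≤ ff ::ₘ a'.erase ff :=
              Multiset.cons_le_cons _ hw2
          _ = a' := Multiset.cons_erase hfa
      · simp only [Multiset.card_cons]
        omega


/-! ### walk binomials span the toric ideal -/

/-- the set of binomials of even closed walks -/
def walkBinomials (G : SimpleGraph V) : Set (MvPolynomial G.edgeSet K) :=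
  {f | ∃ (v : V) (w : G.Walk v v), Even w.length ∧ f = walkBinomial K w}

lemma walkBinomial_eq_prodM {G : SimpleGraph V} {v : V} (w : G.Walk v v) :
    walkBinomial K w = prodM K (posSplit (walkEdgeList w)).1 -
      prodM K (posSplit (walkEdgeList w)).2 := by
  rw [walkBinomial, (altProd_fst_eq K (walkEdgeList w)).1, (altProd_fst_eq K (walkEdgeList w)).2]

lemma prodM_sub_mem [DecidableEq V] {G : SimpleGraph V} (a b : Multiset G.edgeSet)
    (h : tphi K G (prodM K a) = tphi K G (prodM K b)) :
    prodM K a - prodM K b ∈ Ideal.span (walkBinomials K G) := by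
  suffices H : ∀ (n : ℕ) (a b : Multiset G.edgeSet), a.card = n →
      tphi K G (prodM K a) = tphi K G (prodM K b) →
      prodM K a - prodM K b ∈ Ideal.span (walkBinomials K G) by
    exact H a.card a b rfl h
  clear h a b
  intro n
  induction n using Nat.strong_induction_on with
  | _ n IH =>
    intro a b hcard h
    by_cases hab : a = b
    · rw [hab, sub_self]
      exact Ideal.zero_mem _
    · have hdeg : degVec a = degVec b := by
        rw [tphi_prodM, tphi_prodM] at h
        rcases (monomial_eq_monomial_iff _ _ _ _).mp h with h' | h'
        · exact h'.1
        · exact absurd h'.1 one_ne_zero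
      have ha0 : a ≠ 0 := by
        intro h0
        have hb0 : b ≠ 0 := fun hb => hab (by rw [h0, hb])
        obtain ⟨ee, heb⟩ := Multiset.exists_mem_of_ne_zero hb0
        have hmem : (Quot.out (ee : Sym2 V)).1 ∈ (ee : Sym2 V) := Sym2.out_fst_mem _
        have hpos := degVec_pos_of_mem heb hmem
        rw [← hdeg, h0] at hpos
        simp at hpos
      obtain ⟨ee, hea⟩ := Multiset.exists_mem_of_ne_zero ha0
      have hxe : (Quot.out (ee : Sym2 V)).1 ∈ (ee : Sym2 V) := Sym2.out_fst_mem _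
      set x := (Quot.out (ee : Sym2 V)).1 with hx
      set y := Sym2.Mem.other' hxe with hy
      have hspec : s(x, y) = (ee : Sym2 V) := Sym2.other_spec' hxe
      have hadj : G.Adj x y := by
        rw [← SimpleGraph.mem_edgeSet, hspec]
        exact ee.property
      have hinv : ∀ v, degVec (a.erase ee) v + (if v = y then 1 else 0) +
          (if v = x then 1 else 0) = degVec b v := by
        intro v
        have ea : a = ee ::ₘ a.erase ee := (Multiset.cons_erase hea).symm
        have h1 : degVec a v = symDeg (ee : Sym2 V) v + degVec (a.erase ee) v := by
          conv_lhs => rw [ea]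
          rw [degVec_cons]
          simp [Finsupp.add_apply]
        have h3 : symDeg (ee : Sym2 V) v =
            (if v = x then 1 else 0) + (if v = y then 1 else 0) := by
          rw [← hspec, symDeg_apply_mk]
        have hv : degVec a v = degVec b v := by rw [hdeg]
        rw [h1, h3] at hv
        omega
      obtain ⟨w', hw1, hw2, hw3⟩ := exists_alt_walk b.card b (a.erase ee) y x rfl hinv
      set w0 : G.Walk x x := SimpleGraph.Walk.cons hadj w' with hw0
      have hlist : walkEdgeList w0 = (⟨s(x, y), hadj⟩ : G.edgeSet) :: walkEdgeList w' :=
        walkEdgeList_cons hadj w'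
      have hee' : (⟨s(x, y), hadj⟩ : G.edgeSet) = ee := Subtype.ext hspec
      set m1 := (posSplit (walkEdgeList w0)).1 with hm1def
      set m2 := (posSplit (walkEdgeList w0)).2 with hm2def
      have hm1 : m1 = ee ::ₘ (posSplit (walkEdgeList w')).2 := by
        rw [hm1def, hlist, posSplit_cons, hee']
      have hm2 : m2 = (posSplit (walkEdgeList w')).1 := by
        rw [hm2def, hlist, posSplit_cons]
      have hm1a : m1 ≤ a := by
        rw [hm1]
        calc ee ::ₘ (posSplit (walkEdgeList w')).2 ≤ ee ::ₘ a.erase ee :=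
              Multiset.cons_le_cons _ hw2
          _ = a := Multiset.cons_erase hea
      have hm2b : m2 ≤ b := by rw [hm2]; exact hw1
      have hcardm : m1.card = m2.card := by
        rw [hm1, hm2, Multiset.card_cons, hw3]
      have heven : Even w0.length := by
        have hlen : w0.length = m1.card + m2.card := by
          rw [← length_walkEdgeList, ← Multiset.coe_card, ← posSplit_add (walkEdgeList w0)]
          rw [Multiset.card_add, hm1def, hm2def]
        rw [hlen, hcardm]
        exact Even.add_self m2.card
      have hBmem : walkBinomial K w0 ∈ Ideal.span (walkBinomials K G) :=
        Ideal.subset_span ⟨x, w0, heven, rfl⟩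
      have hphi12 : tphi K G (prodM K m1) = tphi K G (prodM K m2) := by
        have := tphi_walkBinomial_eq K w0 heven
        rw [(altProd_fst_eq K (walkEdgeList w0)).1, (altProd_fst_eq K (walkEdgeList w0)).2] at this
        exact this
      have ha_eq : prodM K a = prodM K (a - m1) * prodM K m1 := by
        rw [← prodM_add, tsub_add_cancel_of_le hm1a]
      have hb_eq : prodM K b = prodM K (b - m2) * prodM K m2 := by
        rw [← prodM_add, tsub_add_cancel_of_le hm2b]
      have hphi2 : tphi K G (prodM K (a - m1)) = tphi K G (prodM K (b - m2)) := by
        have h' : tphi K G (prodM K (a - m1)) * tphi K G (prodM K m1) =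
            tphi K G (prodM K (b - m2)) * tphi K G (prodM K m2) := by
          rw [← map_mul, ← map_mul, ← ha_eq, ← hb_eq]
          exact h
        rw [hphi12] at h'
        exact mul_right_cancel₀ (tphi_prodM_ne_zero K m2) h'
      have hlt : (a - m1).card < n := by
        have h1 : m1.card ≤ a.card := Multiset.card_le_card hm1a
        have h2 : 0 < m1.card := by
          rw [hm1, Multiset.card_cons]
          omega
        rw [Multiset.card_sub hm1a]
        omega
      have hIH := IH (a - m1).card hlt (a - m1) (b - m2) rfl hphi2
      have keyid : prodM K a - prodM K b =
          prodM K (a - m1) * walkBinomial K w0 +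
          prodM K m2 * (prodM K (a - m1) - prodM K (b - m2)) := by
        rw [walkBinomial_eq_prodM, ← hm1def, ← hm2def, ha_eq, hb_eq]
        ring
      rw [keyid]
      exact Ideal.add_mem _ (Ideal.mul_mem_left _ _ hBmem) (Ideal.mul_mem_left _ _ hIH)

lemma prodM_toMultiset [DecidableEq V] {G : SimpleGraph V} (m : Multiset G.edgeSet) :
    prodM K m = monomial (Multiset.toFinsupp m) 1 := by
  induction m using Multiset.induction_on with
  | empty => simp
  | cons a s ih =>
    rw [prodM_cons, ih]
    rw [show (X a : MvPolynomial G.edgeSet K) = monomial (Finsupp.single a 1) 1 from rfl]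
    rw [monomial_mul, one_mul]
    congr 1
    rw [show a ::ₘ s = ({a} : Multiset _) + s from by rw [Multiset.singleton_add],
      Multiset.toFinsupp_add, Multiset.toFinsupp_singleton]

lemma tphi_monomial [DecidableEq V] {G : SimpleGraph V} (d : G.edgeSet →₀ ℕ) (r : K) :
    tphi K G (monomial d r) = monomial (degVec (Finsupp.toMultiset d)) r := by
  have h1 : (monomial d r : MvPolynomial G.edgeSet K) = C r * monomial d 1 := by
    rw [C_mul_monomial, mul_one]
  rw [h1, map_mul]
  have h2 : tphi K G (C r) = C r := by
    rw [tphi]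
    simp
  have h3 : (monomial d 1 : MvPolynomial G.edgeSet K) = prodM K (Finsupp.toMultiset d) := by
    rw [prodM_toMultiset, Finsupp.toMultiset_toFinsupp]
  rw [h2, h3, tphi_prodM, C_mul_monomial, mul_one]

lemma toricIdeal_le_span [DecidableEq V] {G : SimpleGraph V} :
    toricIdeal K G ≤ Ideal.span (walkBinomials K G) := by
  intro f hf
  rw [mem_toricIdeal_iff] at hf
  suffices H : ∀ (n : ℕ) (f : MvPolynomial G.edgeSet K), f.support.card = n →
      tphi K G f = 0 → f ∈ Ideal.span (walkBinomials K G) by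
    exact H f.support.card f rfl hf
  clear hf f
  intro n
  induction n using Nat.strong_induction_on with
  | _ n IH =>
    intro f hcard hf
    by_cases hf0 : f = 0
    · rw [hf0]; exact Ideal.zero_mem _
    · obtain ⟨d₀, hd₀⟩ := (MvPolynomial.support_nonempty.mpr hf0)
      have hc₀ : coeff d₀ f ≠ 0 := mem_support_iff.mp hd₀
      have hex : ∃ d₁ ∈ f.support, d₁ ≠ d₀ ∧
          degVec (Finsupp.toMultiset d₁) = degVec (Finsupp.toMultiset d₀) := by
        by_contra hc
        push_neg at hc
        have hco : coeff (degVec (Finsupp.toMultiset d₀)) (tphi K G f) = coeff d₀ f := by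
          conv_lhs => rw [f.as_sum, map_sum]
          rw [MvPolynomial.coeff_sum]
          rw [Finset.sum_eq_single d₀]
          · rw [tphi_monomial, coeff_monomial, if_pos rfl]
          · intro d hd hne
            rw [tphi_monomial, coeff_monomial, if_neg (hc d hd hne)]
          · intro hd
            exact absurd hd₀ hd
        rw [hf] at hco
        exact hc₀ (by rw [← hco, MvPolynomial.coeff_zero])
      obtain ⟨d₁, hd₁s, hne, hA⟩ := hex
      set Bb : MvPolynomial G.edgeSet K :=
        prodM K (Finsupp.toMultiset d₀) - prodM K (Finsupp.toMultiset d₁) with hBbdef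
      have hBb : Bb ∈ Ideal.span (walkBinomials K G) := by
        apply prodM_sub_mem
        rw [tphi_prodM, tphi_prodM, hA]
      have hBbeq : Bb = monomial d₀ 1 - monomial d₁ 1 := by
        rw [hBbdef, prodM_toMultiset, prodM_toMultiset,
          Finsupp.toMultiset_toFinsupp, Finsupp.toMultiset_toFinsupp]
      set g : MvPolynomial G.edgeSet K := f - C (coeff d₀ f) * Bb with hgdef
      have hgsupp : g.support ⊆ f.support.erase d₀ := by
        intro d hd
        have hcd : coeff d g ≠ 0 := mem_support_iff.mp hd
        rw [hgdef, hBbeq] at hcd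
        rw [MvPolynomial.coeff_sub, MvPolynomial.coeff_C_mul, MvPolynomial.coeff_sub,
          coeff_monomial, coeff_monomial] at hcd
        by_cases hdd0 : d₀ = d
        · exfalso
          rw [if_pos hdd0, if_neg (fun hcon : d₁ = d => hne (hcon.trans hdd0.symm))] at hcd
          subst hdd0
          simp at hcd
        · rw [Finset.mem_erase]
          refine ⟨fun hcon => hdd0 hcon.symm, ?_⟩
          rw [mem_support_iff]
          intro hcf
          rw [if_neg hdd0, hcf] at hcd
          by_cases hd1 : d₁ = d
          · rw [if_pos hd1] at hcd
            exact (mem_support_iff.mp (hd1 ▸ hd₁s)) (hd1 ▸ hcf)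
          · rw [if_neg hd1] at hcd
            simp at hcd
      have hglt : g.support.card < n := by
        calc g.support.card ≤ (f.support.erase d₀).card := Finset.card_le_card hgsupp
          _ < f.support.card := Finset.card_erase_lt_of_mem hd₀
          _ = n := hcard
      have hg0 : tphi K G g = 0 := by
        rw [hgdef, map_sub, hf, map_mul, hBbdef, map_sub, tphi_prodM, tphi_prodM, hA,
          sub_self, mul_zero, sub_self]
      have hgmem := IH g.support.card hglt g rfl hg0
      have : f = g + C (coeff d₀ f) * Bb := by rw [hgdef]; ring
      rw [this]
      exact Ideal.add_mem _ hgmem (Ideal.mul_mem_left _ _ hBb)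


lemma span_walkBinomials_le {G : SimpleGraph V} :
    Ideal.span (walkBinomials K G) ≤ toricIdeal K G := by
  rw [Ideal.span_le]
  rintro f ⟨v, w, he, rfl⟩
  exact walkBinomial_mem_toricIdeal K w he

theorem toricIdeal_eq_span [DecidableEq V] {G : SimpleGraph V} :
    toricIdeal K G = Ideal.span (walkBinomials K G) :=
  le_antisymm (toricIdeal_le_span K) (span_walkBinomials_le K)

/-! ### extension ideals -/

lemma attachWith_congr {α : Type} {l l' : List α} (h : l = l') (P : α → Prop)
    (hp : ∀ x ∈ l, P x) :
    l.attachWith P hp = l'.attachWith P (h ▸ hp) := by subst h; rfl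

lemma rename_altProd_attach {H G : SimpleGraph V} (hle : H ≤ G) (l : List (Sym2 V))
    (h1 : ∀ e ∈ l, e ∈ H.edgeSet) (h2 : ∀ e ∈ l, e ∈ G.edgeSet) :
    rename (Set.inclusion (SimpleGraph.edgeSet_mono hle))
        ((altProd K (l.attachWith (· ∈ H.edgeSet) h1)).1) =
      (altProd K (l.attachWith (· ∈ G.edgeSet) h2)).1 ∧
    rename (Set.inclusion (SimpleGraph.edgeSet_mono hle))
        ((altProd K (l.attachWith (· ∈ H.edgeSet) h1)).2) =
      (altProd K (l.attachWith (· ∈ G.edgeSet) h2)).2 := by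
  induction l with
  | nil => simp
  | cons a t ih =>
    rw [List.attachWith_cons, List.attachWith_cons]
    simp only [altProd_cons]
    obtain ⟨ih1, ih2⟩ := ih (fun e he => h1 e (List.mem_cons_of_mem a he))
      (fun e he => h2 e (List.mem_cons_of_mem a he))
    constructor
    · rw [map_mul, rename_X, ih2]
    · exact ih1

/-- master lemma: two walks (in `H ≤ G`) with the same edge list have the same
binomial, up to renaming. -/
lemma rename_walkBinomial {H G : SimpleGraph V} (hle : H ≤ G) {v : V}
    (w' : H.Walk v v) (w : G.Walk v v) (hE : w'.edges = w.edges) :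
    rename (Set.inclusion (SimpleGraph.edgeSet_mono hle)) (walkBinomial K w') =
      walkBinomial K w := by
  rw [walkBinomial, walkBinomial, map_sub]
  have e1 : walkEdgeList w' = w'.edges.attachWith (· ∈ H.edgeSet)
      (fun _ he => w'.edges_subset_edgeSet he) := rfl
  have e2 : walkEdgeList w = w.edges.attachWith (· ∈ G.edgeSet)
      (fun _ he => w.edges_subset_edgeSet he) := rfl
  have h2 : ∀ e ∈ w'.edges, e ∈ G.edgeSet := by
    intro e he
    rw [hE] at he
    exact w.edges_subset_edgeSet he
  obtain ⟨r1, r2⟩ := rename_altProd_attach K hle w'.edges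
    (fun _ he => w'.edges_subset_edgeSet he) h2
  rw [e1, r1, r2, e2]
  have hcongr := attachWith_congr hE (· ∈ G.edgeSet) h2
  first
    | rfl
    | rw [hcongr]

lemma edges_mapLe {H G : SimpleGraph V} (hle : H ≤ G) {u v : V} (w : H.Walk u v) :
    (w.mapLe hle).edges = w.edges := by
  rw [SimpleGraph.Walk.mapLe, SimpleGraph.Walk.edges_map]
  have hfun : (Sym2.map (⇑(SimpleGraph.Hom.ofLE hle))) = fun e => e := by
    funext e
    induction e using Sym2.inductionOn with
    | hf u w => rfl
  rw [hfun]
  exact List.map_id' w.edges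

lemma length_mapLe {H G : SimpleGraph V} (hle : H ≤ G) {u v : V} (w : H.Walk u v) :
    (w.mapLe hle).length = w.length := by
  simp [SimpleGraph.Walk.mapLe]

/-- walk binomials of walks staying inside a subgraph -/
def walkBinomialsIn (G H : SimpleGraph V) : Set (MvPolynomial G.edgeSet K) :=
  {f | ∃ (v : V) (w : G.Walk v v), Even w.length ∧
    (∀ e ∈ w.edges, e ∈ H.edgeSet) ∧ f = walkBinomial K w}

theorem extIdeal_eq_span [DecidableEq V] {G H : SimpleGraph V} (hle : H ≤ G) :
    extIdeal K G H hle = Ideal.span (walkBinomialsIn K G H) := by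
  rw [extIdeal, toricIdeal_eq_span, Ideal.map_span]
  congr 1
  ext f
  constructor
  · rintro ⟨g, ⟨v, w', he, rfl⟩, rfl⟩
    refine ⟨v, w'.mapLe hle, ?_, ?_, ?_⟩
    · rw [length_mapLe]; exact he
    · intro e hemem
      rw [edges_mapLe] at hemem
      exact w'.edges_subset_edgeSet hemem
    · exact rename_walkBinomial K hle w' (w'.mapLe hle) (edges_mapLe hle w').symm
  · rintro ⟨v, w, he, hsub, rfl⟩
    refine ⟨walkBinomial K (w.transfer H hsub), ⟨v, w.transfer H hsub, ?_, rfl⟩, ?_⟩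
    · rw [SimpleGraph.Walk.length_transfer]; exact he
    · exact rename_walkBinomial K hle (w.transfer H hsub) w
        (SimpleGraph.Walk.edges_transfer w hsub)

lemma mem_extIdeal_of_walk [DecidableEq V] {G H : SimpleGraph V} (hle : H ≤ G) {v : V}
    (w : G.Walk v v) (he : Even w.length) (hsub : ∀ e ∈ w.edges, e ∈ H.edgeSet) :
    walkBinomial K w ∈ extIdeal K G H hle := by
  rw [extIdeal_eq_span]
  exact Ideal.subset_span ⟨v, w, he, hsub, rfl⟩

lemma extIdeal_le_toricIdeal [DecidableEq V] {G H : SimpleGraph V} (hle : H ≤ G) :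
    extIdeal K G H hle ≤ toricIdeal K G := by
  rw [extIdeal_eq_span, Ideal.span_le]
  rintro f ⟨v, w, he, _, rfl⟩
  exact walkBinomial_mem_toricIdeal K w he

lemma extIdeal_mono [DecidableEq V] {G H₁ H₂ : SimpleGraph V} (h12 : H₁ ≤ H₂)
    (h1 : H₁ ≤ G) (h2 : H₂ ≤ G) :
    extIdeal K G H₁ h1 ≤ extIdeal K G H₂ h2 := by
  rw [extIdeal_eq_span, extIdeal_eq_span, Ideal.span_le]
  rintro f ⟨v, w, he, hsub, rfl⟩
  exact Ideal.subset_span ⟨v, w, he, fun e hemem => SimpleGraph.edgeSet_mono h12 (hsub e hemem), rfl⟩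


/-! ### homogeneity -/

lemma prodM_isHomogeneous {α : Type} (m : Multiset α) :
    (prodM K m : MvPolynomial α K).IsHomogeneous m.card := by
  induction m using Multiset.induction_on with
  | empty => simpa using isHomogeneous_one α K
  | cons a s ih =>
    rw [prodM_cons, Multiset.card_cons]
    have := (isHomogeneous_X K a).mul ih
    rwa [add_comm 1 s.card] at this

lemma posSplit_card_eq_of_even {α : Type} {l : List α} (h : Even l.length) :
    (posSplit l).1.card = (posSplit l).2.card := (posSplit_card l).1 h

lemma walkBinomial_isHomogeneous {G : SimpleGraph V} {v : V} (w : G.Walk v v)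
    (he : Even w.length) :
    (walkBinomial K w).IsHomogeneous ((posSplit (walkEdgeList w)).2.card) := by
  rw [walkBinomial_eq_prodM]
  have hc : (posSplit (walkEdgeList w)).1.card = (posSplit (walkEdgeList w)).2.card := by
    apply posSplit_card_eq_of_even
    rw [length_walkEdgeList]
    exact he
  exact (hc ▸ prodM_isHomogeneous K _).sub (prodM_isHomogeneous K _)

/-- multiplying with a homogeneous polynomial: the homogeneous components. -/
lemma homogeneousComponent_mul_right {α : Type} {p : MvPolynomial α K} {k : ℕ}
    (hp : p.IsHomogeneous k) (f : MvPolynomial α K) (n : ℕ) :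
    homogeneousComponent n (f * p) =
      if k ≤ n then homogeneousComponent (n - k) f * p else 0 := by
  conv_lhs => rw [← sum_homogeneousComponent f, Finset.sum_mul, map_sum]
  have hterm : ∀ d, homogeneousComponent n (homogeneousComponent d f * p) =
      if n = d + k then homogeneousComponent d f * p else 0 := by
    intro d
    exact homogeneousComponent_of_mem
      ((mem_homogeneousSubmodule _ _).mpr ((homogeneousComponent_isHomogeneous d f).mul hp))
  by_cases hkn : k ≤ n
  · rw [if_pos hkn]
    rw [Finset.sum_congr rfl (fun d _ => hterm d)]
    rw [Finset.sum_eq_single (n - k)]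
    · rw [if_pos (by omega)]
    · intro b _ hbne
      rw [if_neg (by omega)]
    · intro hnot
      rw [Finset.mem_range, not_lt] at hnot
      rw [homogeneousComponent_eq_zero _ f (by omega), zero_mul, if_pos (by omega)]
  · rw [if_neg hkn]
    rw [Finset.sum_congr rfl (fun d _ => hterm d)]
    apply Finset.sum_eq_zero
    intro d _
    rw [if_neg]
    omega

/-- homogeneous components stay in the span of a set of homogeneous elements. -/
lemma homogeneousComponent_mem_span {α : Type} {s : Set (MvPolynomial α K)}
    (hs : ∀ g ∈ s, ∃ k, g.IsHomogeneous k) {D : MvPolynomial α K}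
    (hD : D ∈ Ideal.span s) (n : ℕ) :
    homogeneousComponent n D ∈ Ideal.span s := by
  obtain ⟨c, hcsupp, hcsum⟩ := Submodule.mem_span_set.mp hD
  rw [← hcsum, Finsupp.sum, map_sum]
  apply Ideal.sum_mem
  intro g hg
  have hgs : g ∈ s := hcsupp hg
  obtain ⟨k, hk⟩ := hs g hgs
  rw [smul_eq_mul, homogeneousComponent_mul_right K hk]
  split_ifs
  · exact Ideal.mul_mem_left _ _ (Ideal.subset_span hgs)
  · exact Ideal.zero_mem _

lemma span_diff_singleton_eq {α : Type} [CommRing α] {S : Set α} {B : α} (hBS : B ∈ S)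
    (hB : B ∈ Ideal.span (S \ {B})) : Ideal.span (S \ {B}) = Ideal.span S := by
  apply le_antisymm (Ideal.span_mono Set.diff_subset)
  rw [Ideal.span_le]
  intro x hx
  by_cases hxB : x = B
  · rw [hxB]; exact hB
  · exact Ideal.subset_span ⟨hx, hxB⟩


/-! ### the substitution x_e ↦ 0 -/

section Phi0

variable [DecidableEq V] {G : SimpleGraph V}

noncomputable def phi0 (ee : G.edgeSet) :
    MvPolynomial G.edgeSet K →ₐ[K] MvPolynomial V K :=
  MvPolynomial.aeval (fun f : G.edgeSet => if f = ee then 0 else edgeMon K (f : Sym2 V))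

lemma extIdeal_deleteEdges_le_ker (ee : G.edgeSet) :
    extIdeal K G (G.deleteEdges {(ee : Sym2 V)}) (SimpleGraph.deleteEdges_le _) ≤
      RingHom.ker (phi0 K ee) := by
  rw [extIdeal_eq_span, Ideal.span_le]
  rintro f ⟨v, w, he, hsub, rfl⟩
  set w' := w.transfer _ hsub with hw'
  have hren : rename (Set.inclusion (SimpleGraph.edgeSet_mono
      (SimpleGraph.deleteEdges_le ({(ee : Sym2 V)} : Set (Sym2 V)))))
      (walkBinomial K w') = walkBinomial K w :=
    rename_walkBinomial K (SimpleGraph.deleteEdges_le _) w' w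
      (SimpleGraph.Walk.edges_transfer w hsub)
  show walkBinomial K w ∈ RingHom.ker (phi0 K ee)
  rw [← hren, RingHom.mem_ker]
  have hcomp : phi0 K ee (rename (Set.inclusion (SimpleGraph.edgeSet_mono
      (SimpleGraph.deleteEdges_le ({(ee : Sym2 V)} : Set (Sym2 V)))))
      (walkBinomial K w')) = tphi K (G.deleteEdges {(ee : Sym2 V)}) (walkBinomial K w') := by
    rw [phi0, tphi, aeval_rename]
    have hfun : ((fun f : G.edgeSet => if f = ee then 0 else edgeMon K (f : Sym2 V)) ∘
        (Set.inclusion (SimpleGraph.edgeSet_mono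
          (SimpleGraph.deleteEdges_le ({(ee : Sym2 V)} : Set (Sym2 V)))))) =
        (fun g : (G.deleteEdges {(ee : Sym2 V)}).edgeSet => edgeMon K (g : Sym2 V)) := by
      funext g
      have hg : (g : Sym2 V) ∈ G.edgeSet \ {(ee : Sym2 V)} := by
        rw [← SimpleGraph.edgeSet_deleteEdges]
        exact g.property
      have hne : (Set.inclusion (SimpleGraph.edgeSet_mono
          (SimpleGraph.deleteEdges_le ({(ee : Sym2 V)} : Set (Sym2 V)))) g) ≠ ee := by
        intro hcon
        exact hg.2 (Set.mem_singleton_iff.mpr (congrArg Subtype.val hcon))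
      simp only [Function.comp_apply, if_neg hne]
    rw [hfun]
  rw [hcomp]
  have := walkBinomial_mem_toricIdeal K w' (by
    rw [hw', SimpleGraph.Walk.length_transfer]; exact he)
  rwa [mem_toricIdeal_iff] at this

lemma phi0_prodM_of_not_mem (ee : G.edgeSet) {m : Multiset G.edgeSet} (hm : ee ∉ m) :
    phi0 K ee (prodM K m) ≠ 0 := by
  induction m using Multiset.induction_on with
  | empty => simp
  | cons a s ih =>
    rw [prodM_cons, map_mul]
    have ha : a ≠ ee := fun hcon => hm (hcon ▸ Multiset.mem_cons_self a s)
    have h1 : phi0 K ee (X a) = edgeMon K (a : Sym2 V) := by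
      rw [phi0, aeval_X, if_neg ha]
    rw [h1]
    exact mul_ne_zero (edgeMon_ne_zero K _)
      (ih (fun hcon => hm (Multiset.mem_cons_of_mem hcon)))

lemma phi0_prodM_of_mem (ee : G.edgeSet) {m : Multiset G.edgeSet} (hm : ee ∈ m) :
    phi0 K ee (prodM K m) = 0 := by
  rw [← Multiset.cons_erase hm, prodM_cons, map_mul]
  have h1 : phi0 K ee (X ee) = 0 := by rw [phi0, aeval_X, if_pos rfl]
  rw [h1, zero_mul]

/-! ### minimal generating sets cannot contain a binomial with a common variable -/

lemma not_mem_both_of_min (S : Set (MvPolynomial G.edgeSet K))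
    (hspan : Ideal.span S = toricIdeal K G)
    (hmin : ∀ T : Set (MvPolynomial G.edgeSet K), T ⊂ S → Ideal.span T ≠ toricIdeal K G)
    (hbin : ∀ f ∈ S, IsBinomial K G f)
    {v : V} {w : G.Walk v v} (hwe : Even w.length) (hBS : walkBinomial K w ∈ S)
    (ee : G.edgeSet)
    (h1 : ee ∈ (posSplit (walkEdgeList w)).1) (h2 : ee ∈ (posSplit (walkEdgeList w)).2) :
    False := by
  set m1 := (posSplit (walkEdgeList w)).1 with hm1
  set m2 := (posSplit (walkEdgeList w)).2 with hm2
  set q := m2.card with hq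
  set B := walkBinomial K w with hBdef
  have hBeq : B = prodM K m1 - prodM K m2 := walkBinomial_eq_prodM K w
  have hqc : m1.card = m2.card := by
    apply posSplit_card_eq_of_even
    rw [length_walkEdgeList]
    exact hwe
  set C := prodM K (m1.erase ee) - prodM K (m2.erase ee) with hCdef
  have e1 : prodM K m1 = X ee * prodM K (m1.erase ee) := by
    conv_lhs => rw [← Multiset.cons_erase h1]
    rw [prodM_cons]
  have e2 : prodM K m2 = X ee * prodM K (m2.erase ee) := by
    conv_lhs => rw [← Multiset.cons_erase h2]
    rw [prodM_cons]
  have hBC : B = X ee * C := by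
    rw [hBeq, e1, e2, hCdef]
    ring
  have hBI : B ∈ toricIdeal K G := hspan ▸ Ideal.subset_span hBS
  have hprime : (toricIdeal K G).IsPrime := by
    rw [toricIdeal_eq_ker]
    exact RingHom.ker_isPrime _
  have hXnot : X ee ∉ toricIdeal K G := by
    rw [mem_toricIdeal_iff]
    intro hcon
    apply edgeMon_ne_zero K (ee : Sym2 V)
    rw [← hcon, tphi, aeval_X]
  have hCI : C ∈ toricIdeal K G := by
    rcases hprime.mem_or_mem (hBC ▸ hBI) with h | h
    · exact absurd h hXnot
    · exact h
  have hq1 : 0 < q := Multiset.card_pos_iff_exists_mem.mpr ⟨ee, h2⟩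
  have hChom : C.IsHomogeneous (q - 1) := by
    have hc1 : (m1.erase ee).card = q - 1 := by
      rw [Multiset.card_erase_of_mem h1, hqc]
      rfl
    have hc2 : (m2.erase ee).card = q - 1 := by
      rw [Multiset.card_erase_of_mem h2]
      rfl
    exact (hc1 ▸ prodM_isHomogeneous K _).sub (hc2 ▸ prodM_isHomogeneous K _)
  have hBhom : B.IsHomogeneous q := walkBinomial_isHomogeneous K w hwe
  have hins : insert B (S \ {B}) = S := by
    rw [Set.insert_diff_singleton, Set.insert_eq_of_mem hBS]
  have hCmem : C ∈ Ideal.span (insert B (S \ {B})) := by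
    rw [hins, hspan]
    exact hCI
  obtain ⟨a, z, hz, hCaz⟩ := Ideal.mem_span_insert.mp hCmem
  have hcompC : homogeneousComponent (q - 1) C = C := by
    rw [homogeneousComponent_of_mem ((mem_homogeneousSubmodule _ _).mpr hChom), if_pos rfl]
  have hcompaB : homogeneousComponent (q - 1) (a * B) = 0 := by
    rw [homogeneousComponent_mul_right K hBhom, if_neg (by omega)]
  have hbinhom : ∀ g ∈ S \ {B}, ∃ k, g.IsHomogeneous k := by
    rintro g ⟨hgS, -⟩
    obtain ⟨v', w', he', rfl⟩ := hbin g hgS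
    exact ⟨_, walkBinomial_isHomogeneous K w' he'⟩
  have hcompz : homogeneousComponent (q - 1) z ∈ Ideal.span (S \ {B}) :=
    homogeneousComponent_mem_span K hbinhom hz _
  have hCspan : C ∈ Ideal.span (S \ {B}) := by
    have hco := congrArg (homogeneousComponent (q - 1)) hCaz
    rw [map_add, hcompC, hcompaB, zero_add] at hco
    rw [hco]
    exact hcompz
  have hBspan : B ∈ Ideal.span (S \ {B}) := by
    have hmm := Ideal.mul_mem_left (Ideal.span (S \ {B})) (X ee) hCspan
    rwa [← hBC] at hmm
  have heq := span_diff_singleton_eq hBS hBspan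
  exact hmin (S \ {B}) ⟨Set.diff_subset, fun hsub => (hsub hBS).2 rfl⟩ (heq.trans hspan)

/-! ### properness of `I_{G \ e}` -/

lemma extIdeal_deleteEdges_ne (S : Set (MvPolynomial G.edgeSet K))
    (hspan : Ideal.span S = toricIdeal K G)
    (hmin : ∀ T : Set (MvPolynomial G.edgeSet K), T ⊂ S → Ideal.span T ≠ toricIdeal K G)
    (hbin : ∀ f ∈ S, IsBinomial K G f)
    {v : V} {w : G.Walk v v} (hwe : Even w.length) (hBS : walkBinomial K w ∈ S)
    (ee : G.edgeSet) (hin : (ee : Sym2 V) ∈ w.edges) :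
    extIdeal K G (G.deleteEdges {(ee : Sym2 V)}) (SimpleGraph.deleteEdges_le _) ≠
      toricIdeal K G := by
  intro heq
  have hBI : walkBinomial K w ∈ toricIdeal K G := hspan ▸ Ideal.subset_span hBS
  have hBker : walkBinomial K w ∈ RingHom.ker (phi0 K ee) :=
    extIdeal_deleteEdges_le_ker K ee (heq ▸ hBI)
  have hmem12 : ee ∈ (posSplit (walkEdgeList w)).1 + (posSplit (walkEdgeList w)).2 := by
    rw [posSplit_add]
    rw [Multiset.mem_coe, mem_walkEdgeList]
    exact hin
  rw [RingHom.mem_ker, walkBinomial_eq_prodM, map_sub] at hBker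
  by_cases hm1 : ee ∈ (posSplit (walkEdgeList w)).1 <;>
    by_cases hm2 : ee ∈ (posSplit (walkEdgeList w)).2
  · exact not_mem_both_of_min K S hspan hmin hbin hwe hBS ee hm1 hm2
  · rw [phi0_prodM_of_mem K ee hm1, zero_sub, neg_eq_zero] at hBker
    exact phi0_prodM_of_not_mem K ee hm2 hBker
  · rw [phi0_prodM_of_mem K ee hm2, sub_zero] at hBker
    exact phi0_prodM_of_not_mem K ee hm1 hBker
  · rcases Multiset.mem_add.mp hmem12 with h | h
    · exact hm1 h
    · exact hm2 h

end Phi0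

end ToricAux

namespace ToricAux

/-! ### extracting minimal generating subsets -/

lemma exists_minimal_span_subset {R : Type} [CommRing R] (I : Ideal R) :
    ∀ (n : ℕ) (T : Finset R), T.card = n → Ideal.span (T : Set R) = I →
    ∃ S : Finset R, (S : Set R) ⊆ (T : Set R) ∧ Ideal.span (S : Set R) = I ∧
      ∀ T' : Set R, T' ⊂ (S : Set R) → Ideal.span T' ≠ I := by
  intro n
  induction n using Nat.strong_induction_on with
  | _ n IH =>
    intro T hcard hspan
    by_cases hex : ∃ T' : Set R, T' ⊂ (T : Set R) ∧ Ideal.span T' = I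
    · obtain ⟨T', hT'ss, hT'span⟩ := hex
      have hfin : T'.Finite := T.finite_toSet.subset hT'ss.subset
      have hss : hfin.toFinset ⊂ T := by
        rw [← Finset.coe_ssubset, hfin.coe_toFinset]
        exact hT'ss
      have hlt : hfin.toFinset.card < n := hcard ▸ Finset.card_lt_card hss
      obtain ⟨S, hs1, hs2, hs3⟩ := IH hfin.toFinset.card hlt hfin.toFinset rfl
        (by rw [hfin.coe_toFinset]; exact hT'span)
      exact ⟨S, hs1.trans (by rw [hfin.coe_toFinset]; exact hT'ss.subset), hs2, hs3⟩
    · push_neg at hex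
      exact ⟨T, subset_rfl, hspan, fun T' hss hsp => hex T' hss hsp⟩

lemma exists_finset_span_subset {R : Type} [CommRing R] [IsNoetherianRing R] (U : Set R) :
    ∃ T : Finset R, (T : Set R) ⊆ U ∧ Ideal.span (T : Set R) = Ideal.span U := by
  classical
  obtain ⟨F, hF⟩ := IsNoetherian.noetherian (Ideal.span U)
  have hmem : ∀ f : {x // x ∈ F}, ∃ Tf : Finset R, (Tf : Set R) ⊆ U ∧
      (f : R) ∈ Ideal.span ((Tf : Finset R) : Set R) := by
    rintro ⟨f, hf⟩
    have : f ∈ Ideal.span U := by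
      rw [← hF]
      exact Submodule.subset_span (Finset.mem_coe.mpr hf)
    exact Submodule.mem_span_finite_of_mem_span this
  choose t ht1 ht2 using hmem
  refine ⟨F.attach.biUnion t, ?_, ?_⟩
  · intro x hx
    rw [Finset.coe_biUnion] at hx
    simp only [Set.mem_iUnion] at hx
    obtain ⟨f, hf, hx⟩ := hx
    exact ht1 f hx
  · apply le_antisymm
    · apply Ideal.span_mono
      intro x hx
      rw [Finset.coe_biUnion] at hx
      simp only [Set.mem_iUnion] at hx
      obtain ⟨f, hf, hx⟩ := hx
      exact ht1 f hx
    · rw [← hF]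
      apply Submodule.span_le.mpr
      intro f hf
      have hsub : ((t ⟨f, hf⟩ : Finset R) : Set R) ⊆ ((F.attach.biUnion t : Finset R) : Set R) := by
        apply Finset.coe_subset.mpr
        exact Finset.subset_biUnion_of_mem t (Finset.mem_attach F ⟨f, hf⟩)
      exact Ideal.span_mono hsub (ht2 ⟨f, hf⟩)

end ToricAux

open ToricAux in
/-- The toric ideal `I_G` is subgraph splittable if and only if it is
edge splittable. -/
theorem subgraphSplittable_iff_edgeSplittable
    (K : Type) [Field K] {V : Type} [Fintype V] [DecidableEq V]
    (G : SimpleGraph V) (hG : G.Connected) :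
    SubgraphSplittable K G ↔ EdgeSplittable K G := by
  constructor
  · rintro ⟨G₁, G₂, h₁, h₂, hsp, hne₁, hne₂⟩
    classical
    -- the union of the walk-binomial generating sets of the two extension ideals
    -- generates the toric ideal
    have hspanU : Ideal.span (walkBinomialsIn K G G₁ ∪ walkBinomialsIn K G G₂) =
        toricIdeal K G := by
      rw [Ideal.span_union, ← extIdeal_eq_span K h₁, ← extIdeal_eq_span K h₂,
        ← Ideal.add_eq_sup, ← hsp]
    -- find a finite and then a minimal generating subset
    obtain ⟨T, hTsub, hTspan⟩ :=
      exists_finset_span_subset (walkBinomialsIn K G G₁ ∪ walkBinomialsIn K G G₂)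
    rw [hspanU] at hTspan
    obtain ⟨S₀, hS₀T, hS₀span, hS₀min⟩ :=
      exists_minimal_span_subset (toricIdeal K G) T.card T rfl hTspan
    have hS₀U : (S₀ : Set (MvPolynomial G.edgeSet K)) ⊆
        walkBinomialsIn K G G₁ ∪ walkBinomialsIn K G G₂ := hS₀T.trans hTsub
    -- choose walk data for each element of `S₀`
    have hdata : ∀ s : {x // x ∈ S₀}, ∃ (v : V) (w : G.Walk v v), Even w.length ∧
        ((∀ e' ∈ w.edges, e' ∈ G₁.edgeSet) ∨ (∀ e' ∈ w.edges, e' ∈ G₂.edgeSet)) ∧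
        (s : MvPolynomial G.edgeSet K) = walkBinomial K w := by
      rintro ⟨f, hf⟩
      rcases hS₀U hf with h | h
      · obtain ⟨v, w, hev, hsub, rfl⟩ := h
        exact ⟨v, w, hev, Or.inl hsub, rfl⟩
      · obtain ⟨v, w, hev, hsub, rfl⟩ := h
        exact ⟨v, w, hev, Or.inr hsub, rfl⟩
    choose bs ws hev hside heq using hdata
    let eqv : Fin S₀.card → {x // x ∈ S₀} := S₀.equivFin.symm
    let S : BinomialWalkGens K G :=
      ⟨S₀.card, fun i => bs (eqv i), fun i => ws (eqv i), fun i => hev (eqv i)⟩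
    have hwalkj : ∀ j, S.walk j = ws (eqv j) := fun _ => rfl
    have hbeq : S.binomials = (S₀ : Set (MvPolynomial G.edgeSet K)) := by
      ext f
      constructor
      · rintro ⟨i, rfl⟩
        show walkBinomial K (ws (eqv i)) ∈ (S₀ : Set (MvPolynomial G.edgeSet K))
        rw [← heq (eqv i)]
        exact (eqv i).property
      · intro hf
        refine ⟨S₀.equivFin ⟨f, hf⟩, ?_⟩
        show walkBinomial K (ws (eqv (S₀.equivFin ⟨f, hf⟩))) = f
        have he' : eqv (S₀.equivFin ⟨f, hf⟩) = ⟨f, hf⟩ := S₀.equivFin.symm_apply_apply _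
        rw [he', ← heq ⟨f, hf⟩]
    have hmins : S.IsMinGens (toricIdeal K G) := by
      refine ⟨?_, ?_, ?_⟩
      · rw [hbeq]
        intro f hf
        rcases hS₀U hf with h | h
        · obtain ⟨v, w, hev', _, rfl⟩ := h
          exact ⟨v, w, hev', rfl⟩
        · obtain ⟨v, w, hev', _, rfl⟩ := h
          exact ⟨v, w, hev', rfl⟩
      · rw [hbeq]; exact hS₀span
      · rw [hbeq]; exact hS₀min
    -- choose an edge `e` of some walk, not in `G₂`
    have hnotall : ¬ ∀ i : Fin S.r, ∀ e' ∈ (S.walk i).edges, e' ∈ G₂.edgeSet := by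
      intro hall
      apply hne₂
      apply le_antisymm (extIdeal_le_toricIdeal K h₂)
      conv_lhs => rw [← hmins.2.1]
      rw [Ideal.span_le]
      rintro f ⟨j, rfl⟩
      exact mem_extIdeal_of_walk K h₂ (S.walk j) (S.even j) (hall j)
    push_neg at hnotall
    obtain ⟨i, e, hei, heG₂⟩ := hnotall
    have heG : e ∈ G.edgeSet := (S.walk i).edges_subset_edgeSet hei
    have hside' : ∀ j : Fin S.r, e ∈ (S.walk j).edges →
        ∀ e' ∈ (S.walk j).edges, e' ∈ G₁.edgeSet := by
      intro j hej
      rcases hside (eqv j) with h | h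
      · exact h
      · rw [hwalkj] at hej
        exact absurd (h e hej) heG₂
    have hGSe : S.GSe e ≤ G₁ := by
      intro u v' hadj
      rw [BinomialWalkGens.GSe, SimpleGraph.fromEdgeSet_adj] at hadj
      obtain ⟨hm, hned⟩ := hadj
      simp only [Set.mem_iUnion, Set.mem_setOf_eq] at hm
      obtain ⟨j, hej, hj⟩ := hm
      exact G₁.mem_edgeSet.mp (hside' j hej _ hj)
    refine ⟨e, heG, S, hmins, ?_, ?_, ?_⟩
    · -- the splitting equation
      apply le_antisymm
      · conv_lhs => rw [← hmins.2.1]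
        rw [Ideal.span_le]
        rintro f ⟨j, rfl⟩
        simp only [SetLike.mem_coe]
        rw [Ideal.add_eq_sup]
        by_cases hej : e ∈ (S.walk j).edges
        · apply Submodule.mem_sup_left
          apply mem_extIdeal_of_walk K (S.GSe_le e) (S.walk j) (S.even j)
          intro e' he'
          rw [BinomialWalkGens.GSe, SimpleGraph.edgeSet_fromEdgeSet]
          refine ⟨?_, ?_⟩
          · simp only [Set.mem_iUnion, Set.mem_setOf_eq]
            exact ⟨j, hej, he'⟩
          · exact G.not_isDiag_of_mem_edgeSet ((S.walk j).edges_subset_edgeSet he')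
        · apply Submodule.mem_sup_right
          apply mem_extIdeal_of_walk K (SimpleGraph.deleteEdges_le _) (S.walk j) (S.even j)
          intro e' he'
          rw [SimpleGraph.edgeSet_deleteEdges]
          refine ⟨(S.walk j).edges_subset_edgeSet he', ?_⟩
          intro hd
          rw [Set.mem_singleton_iff] at hd
          exact hej (hd ▸ he')
      · rw [Ideal.add_eq_sup]
        exact sup_le (extIdeal_le_toricIdeal K _) (extIdeal_le_toricIdeal K _)
    · -- `I_{G_S^e}` is proper
      intro hcon
      apply hne₁
      apply le_antisymm (extIdeal_le_toricIdeal K h₁)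
      rw [← hcon]
      exact extIdeal_mono K hGSe _ h₁
    · -- `I_{G \ e}` is proper
      have hBin : walkBinomial K (S.walk i) ∈ S.binomials := ⟨i, rfl⟩
      exact extIdeal_deleteEdges_ne K S.binomials hmins.2.1 hmins.2.2 hmins.1
        (S.even i) hBin ⟨e, heG⟩ hei
  · rintro ⟨e, he, S, hmin, hsplit⟩
    exact ⟨S.GSe e, G.deleteEdges {e}, S.GSe_le e, SimpleGraph.deleteEdges_le _, hsplit⟩
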